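/- arXiv:2304.09419 — 9 statements merged into one kernel-verified Lean document; each statement's English description precedes it below -/
import Mathlib

section
/- For any binary relation R, the asymmetric part of the Suzumura-consistent closure is contained both in the asymmetric part of the transitive closure and in the asymmetric part of R itself: P(S(R)) ⊆ P(T(R)) and P(S(R)) ⊆ P(R). -/
def Pasym {A : Type*} (R : A → A → Prop) : A → A → Prop :=
  fun a b => R a b ∧ ¬ R b a

def PAcyclic {A : Type*} (R : A → A → Prop) : Prop :=
  ∀ a b, Relation.TransGen (Pasym R) a b → ¬ Pasym R b a

def SuzumuraConsistent {A : Type*} (R : A → A → Prop) : Prop :=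
  ∀ a b, Relation.TransGen R a b → ¬ Pasym R b a

def Scl {A : Type*} (R : A → A → Prop) : A → A → Prop :=
  fun a b => R a b ∨ (Relation.TransGen R a b ∧ R b a)

def IsLinearRel {A : Type*} (L : A → A → Prop) : Prop :=
  (∀ a b, L a b → ¬ L b a) ∧
  (∀ a b c, L a b → L b c → L a c) ∧
  (∀ a b c, ¬ L a b → ¬ L b c → ¬ L a c) ∧
  (∀ a b, a ≠ b → L a b ∨ L b a)

def Respects {A : Type*} (R L : A → A → Prop) : Prop :=
  IsLinearRel L ∧ ∀ a b, Pasym R a b → L a b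

def IsWeakOrder {A : Type*} (R : A → A → Prop) : Prop :=
  (∀ a b, R a b → ¬ R b a) ∧
  (∀ a b c, R a b → R b c → R a c) ∧
  (∀ a b c, ¬ R a b → ¬ R b c → ¬ R a c)

theorem stmt5 {A : Type*} (R : A → A → Prop) :
    (∀ a b : A, Pasym (Scl R) a b → Pasym (Relation.TransGen R) a b) ∧
    (∀ a b : A, Pasym (Scl R) a b → Pasym R a b) := by
  constructor
  · rintro a b ⟨hab, hnba⟩
    have hRab : R a b := by
      rcases hab with h | ⟨_, hba⟩
      · exact h
      · exact absurd (Or.inl hba) hnba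
    refine ⟨Relation.TransGen.single hRab, fun hT => ?_⟩
    exact hnba (Or.inr ⟨hT, hRab⟩)
  · rintro a b ⟨hab, hnba⟩
    have hRab : R a b := by
      rcases hab with h | ⟨_, hba⟩
      · exact h
      · exact absurd (Or.inl hba) hnba
    exact ⟨hRab, fun h => hnba (Or.inl h)⟩
end

section
/- For every α ∈ [1/2, 1), the set ℛ(T(R_α)) of linear orders respecting the transitive closure of the supermajority relation R_α is nonempty and is contained in ℛ(S(R_α)), the set of linear orders respecting the Suzumura-consistent closure; and if ℛ(R_α) is nonempty then ℛ(T(R_α)) = ℛ(S(R_α)) = ℛ(R_α). -/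
noncomputable def Ncnt {A ι : Type*} (Ri : ι → A → A → Prop) (a b : A) : ℕ :=
  Nat.card {i : ι // Pasym (Ri i) a b}

noncomputable def PhiFn {A ι : Type*} (Ri : ι → A → A → Prop) (f : ℕ → ℕ → ℝ) (a b : A) : ℝ :=
  f (Ncnt Ri a b) (Ncnt Ri b a)

def Rmaj {A ι : Type*} (Ri : ι → A → A → Prop) (f : ℕ → ℕ → ℝ) (α : ℝ) : A → A → Prop :=
  fun a b => PhiFn Ri f a b > α

theorem f_le_diag (C : ℕ) (f : ℕ → ℕ → ℝ)
    (hf2 : ∀ n m, n + m ≤ C → f n (m+1) < f n m) :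
    ∀ m n, n ≤ m → n + m ≤ C → f n m ≤ f n n := by
  intro m
  induction m with
  | zero =>
      intro n hn _
      have : n = 0 := by omega
      subst this; exact le_refl _
  | succ k ih =>
      intro n hn hc
      rcases Nat.lt_or_ge n (k+1) with h | h
      · have h1 : f n (k+1) < f n k := hf2 n k (by omega)
        have h2 : f n k ≤ f n n := ih n (by omega) (by omega)
        linarith
      · have : n = k + 1 := by omega
        subst this; exact le_refl _

theorem exists_ext {A : Type*} (R : A → A → Prop)
    (htr : ∀ a b c, R a b → R b c → R a c)
    (hAs : ∀ a b, R a b → ¬ R b a) :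
    ∃ L, IsLinearRel L ∧ ∀ a b, R a b → L a b := by
  classical
  let r : A → A → Prop := fun a b => R a b ∨ a = b
  haveI : IsPartialOrder A r := by
    refine { refl := ?_, trans := ?_, antisymm := ?_ }
    · intro a; exact Or.inr rfl
    · intro a b c hab hbc
      rcases hab with hab | rfl
      · rcases hbc with hbc | rfl
        · exact Or.inl (htr _ _ _ hab hbc)
        · exact Or.inl hab
      · exact hbc
    · intro a b hab hba
      rcases hab with hab | rfl
      · rcases hba with hba | rfl
        · exact absurd hba (hAs _ _ hab)
        · rfl
      · rfl
  obtain ⟨s, hs, hrs⟩ := extend_partialOrder r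
  refine ⟨fun a b => s a b ∧ ¬ s b a, ⟨?_, ?_, ?_, ?_⟩, ?_⟩
  · exact fun a b ⟨h1, h2⟩ ⟨h3, _⟩ => h2 h3
  · intro a b c ⟨h1, h2⟩ ⟨h3, h4⟩
    exact ⟨hs.trans _ _ _ h1 h3, fun hca => h2 (hs.trans _ _ _ h3 hca)⟩
  · intro a b c hab hbc ⟨hac, hca⟩
    have hba : s b a := by
      by_contra h
      rcases hs.total a b with h1 | h1
      · exact hab ⟨h1, h⟩
      · exact h h1
    have hcb : s c b := by
      by_contra h
      rcases hs.total b c with h1 | h1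
      · exact hbc ⟨h1, h⟩
      · exact h h1
    exact hca (hs.trans _ _ _ hcb hba)
  · intro a b hne
    rcases hs.total a b with h | h
    · by_cases h2 : s b a
      · exact absurd (hs.antisymm _ _ h h2) hne
      · exact Or.inl ⟨h, h2⟩
    · by_cases h2 : s a b
      · exact absurd (hs.antisymm _ _ h2 h) hne
      · exact Or.inr ⟨h, h2⟩
  · intro a b hab
    have hne : a ≠ b := by
      rintro rfl; exact hAs _ _ hab hab
    have h1 : s a b := hrs _ _ (Or.inl hab)
    refine ⟨h1, fun h2 => hne (hs.antisymm _ _ h1 h2)⟩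

theorem ncnt_add_le {A ι : Type*} [Fintype ι] (Ri : ι → A → A → Prop) (a b : A) :
    Ncnt Ri a b + Ncnt Ri b a ≤ Fintype.card ι := by
  classical
  have h1 : Ncnt Ri a b = ({i | Pasym (Ri i) a b} : Set ι).ncard := Nat.card_coe_set_eq _
  have h2 : Ncnt Ri b a = ({i | Pasym (Ri i) b a} : Set ι).ncard := Nat.card_coe_set_eq _
  have hdisj : Disjoint ({i | Pasym (Ri i) a b} : Set ι) {i | Pasym (Ri i) b a} := by
    rw [Set.disjoint_left]
    rintro i ⟨hab, hnba⟩ ⟨hba, _⟩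
    exact hnba hba
  have hu := Set.ncard_union_eq hdisj (Set.toFinite _) (Set.toFinite _)
  have hle : (({i | Pasym (Ri i) a b} : Set ι) ∪ {i | Pasym (Ri i) b a}).ncard ≤
      (Set.univ : Set ι).ncard := Set.ncard_le_ncard (Set.subset_univ _) (Set.toFinite _)
  rw [Set.ncard_univ, Nat.card_eq_fintype_card] at hle
  omega

theorem stmt8 {A ι : Type*} [Fintype A] [Fintype ι] (Ri : ι → A → A → Prop)
    (f : ℕ → ℕ → ℝ)
    (hf0 : ∀ n m : ℕ, f n m ∈ Set.Icc (0:ℝ) 1)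
    (hf1 : ∀ n m : ℕ, n + m ≤ Fintype.card ι → f (n+1) m > f n m)
    (hf2 : ∀ n m : ℕ, n + m ≤ Fintype.card ι → f n (m+1) < f n m)
    (hf3 : ∀ n : ℕ, n + n ≤ Fintype.card ι → f n n = 1/2) :
    ∀ α : ℝ, 1/2 ≤ α → α < 1 →
      (∃ L : A → A → Prop, Respects (Relation.TransGen (Rmaj Ri f α)) L) ∧
      (∀ L : A → A → Prop,
        Respects (Relation.TransGen (Rmaj Ri f α)) L → Respects (Scl (Rmaj Ri f α)) L) ∧
      ((∃ L : A → A → Prop, Respects (Rmaj Ri f α) L) →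
        ∀ L : A → A → Prop,
          (Respects (Relation.TransGen (Rmaj Ri f α)) L ↔ Respects (Rmaj Ri f α) L) ∧
          (Respects (Scl (Rmaj Ri f α)) L ↔ Respects (Rmaj Ri f α) L)) := by
  classical
  intro α hα1 hα2
  set R := Rmaj Ri f α with hRdef
  have hasym : ∀ a b : A, R a b → ¬ R b a := by
    intro a b h1 h2
    have hd : Ncnt Ri a b + Ncnt Ri b a ≤ Fintype.card ι := ncnt_add_le Ri a b
    have h1' : f (Ncnt Ri a b) (Ncnt Ri b a) > α := h1
    have h2' : f (Ncnt Ri b a) (Ncnt Ri a b) > α := h2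
    rcases le_total (Ncnt Ri a b) (Ncnt Ri b a) with h | h
    · have hle := f_le_diag (Fintype.card ι) f hf2 (Ncnt Ri b a) (Ncnt Ri a b) h hd
      have heq := hf3 (Ncnt Ri a b) (by omega)
      linarith
    · have hle := f_le_diag (Fintype.card ι) f hf2 (Ncnt Ri a b) (Ncnt Ri b a) h (by omega)
      have heq := hf3 (Ncnt Ri b a) (by omega)
      linarith
  have hP : ∀ a b, Pasym R a b ↔ R a b := fun a b => ⟨fun h => h.1, fun h => ⟨h, hasym a b h⟩⟩
  have hPT_tr : ∀ a b c, Pasym (Relation.TransGen R) a b → Pasym (Relation.TransGen R) b c →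
      Pasym (Relation.TransGen R) a c := by
    rintro a b c ⟨h1, h2⟩ ⟨h3, h4⟩
    exact ⟨h1.trans h3, fun h => h2 (h3.trans h)⟩
  have hPT_as : ∀ a b, Pasym (Relation.TransGen R) a b → ¬ Pasym (Relation.TransGen R) b a :=
    fun a b h1 h2 => h1.2 h2.1
  obtain ⟨L0, hL0lin, hL0⟩ := exists_ext (Pasym (Relation.TransGen R)) hPT_tr hPT_as
  have hSclP : ∀ a b, Pasym (Scl R) a b → Pasym (Relation.TransGen R) a b := by
    rintro a b ⟨h1, h2⟩
    have hnba : ¬ R b a := fun h => h2 (Or.inl h)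
    rcases h1 with h1 | ⟨hT, hba⟩
    · exact ⟨Relation.TransGen.single h1, fun hTba => h2 (Or.inr ⟨hTba, h1⟩)⟩
    · exact absurd hba hnba
  have key : ∀ L : A → A → Prop, IsLinearRel L → (∀ a b, Pasym R a b → L a b) →
      ∀ a b, Relation.TransGen R a b → L a b := by
    intro L hlin hresp a b h
    induction h with
    | single h => exact hresp _ _ ((hP _ _).mpr h)
    | tail _ h ih => exact hlin.2.1 _ _ _ ih (hresp _ _ ((hP _ _).mpr h))
  refine ⟨⟨L0, hL0lin, hL0⟩, ?_, ?_⟩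
  · rintro L ⟨hlin, hresp⟩
    exact ⟨hlin, fun a b h => hresp a b (hSclP a b h)⟩
  · rintro ⟨L1, hL1lin, hL1⟩ L
    have hac : ∀ a b, Relation.TransGen R a b → ¬ R b a := fun a b hT hba =>
      hL1lin.1 a b (key L1 hL1lin hL1 a b hT) (hL1 b a ((hP b a).mpr hba))
    have hRPT : ∀ a b, R a b → Pasym (Relation.TransGen R) a b := fun a b h =>
      ⟨Relation.TransGen.single h, fun hT => hac b a hT h⟩
    constructor
    · constructor
      · rintro ⟨hlin, hresp⟩
        exact ⟨hlin, fun a b h => hresp a b (hRPT a b h.1)⟩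
      · rintro ⟨hlin, hresp⟩
        exact ⟨hlin, fun a b h => key L hlin hresp a b h.1⟩
    · constructor
      · rintro ⟨hlin, hresp⟩
        refine ⟨hlin, fun a b h => hresp a b ?_⟩
        refine ⟨Or.inl h.1, ?_⟩
        rintro (hba | ⟨hTba, _⟩)
        · exact hasym a b h.1 hba
        · exact hac b a hTba h.1
      · rintro ⟨hlin, hresp⟩
        exact ⟨hlin, fun a b h => key L hlin hresp a b (hSclP a b h).1⟩
end

section
/- If every individual preference R^i is a weak order, let α* = min{α ∈ [1/2,1) : R_α is P-acyclic}. Then the intersection over all α with R_α P-acyclic of the sets ℛ(R_α) of respecting linear orders equals ℛ(R_{α*}), and this set is nonempty. -/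
lemma myCardLemma {ι : Type*} [Fintype ι] (p q : ι → Prop)
    (h : ∀ i, ¬(p i ∧ q i)) :
    Nat.card {i // p i} + Nat.card {i // q i} ≤ Fintype.card ι := by
  classical
  simp only [Nat.card_eq_fintype_card, Fintype.card_subtype]
  rw [← Finset.card_union_of_disjoint]
  · exact Finset.card_le_univ _
  · rw [Finset.disjoint_filter]; exact fun i _ hp hq => h i ⟨hp, hq⟩

lemma myfhalf (f : ℕ → ℕ → ℝ) (N : ℕ)
    (hf2 : ∀ n m, n + m ≤ N → f n (m+1) < f n m)
    (hf3 : ∀ n, n + n ≤ N → f n n = 1/2)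
    {n m : ℕ} (hnm : n ≤ m) (hc : n + m ≤ N) : f n m ≤ 1/2 := by
  obtain ⟨k, rfl⟩ := Nat.exists_eq_add_of_le hnm
  clear hnm
  induction k with
  | zero => simp only [Nat.add_zero]; rw [hf3 n (by omega)]
  | succ k ih =>
    have h1 : f n (n + k + 1) < f n (n + k) := hf2 n (n+k) (by omega)
    have h2 := ih (by omega)
    calc f n (n + (k+1)) = f n (n + k + 1) := by ring_nf
    _ ≤ 1/2 := le_of_lt (lt_of_lt_of_le h1 h2)

lemma myExtend {A : Type*} (R : A → A → Prop)
    (hasym : ∀ a b, R a b → ¬ R b a)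
    (hPA : PAcyclic R) :
    ∃ L : A → A → Prop, Respects R L := by
  classical
  -- Pasym R = R
  have hpe : ∀ a b, Pasym R a b ↔ R a b := by
    intro a b
    constructor
    · exact fun h => h.1
    · exact fun h => ⟨h, hasym a b h⟩
  have hTG : ∀ a b, Relation.TransGen R a b → Relation.TransGen (Pasym R) a b := by
    intro a b h
    exact Relation.TransGen.mono (fun x y hxy => (hpe x y).mpr hxy) a b h
  -- TransGen R is irreflexive
  have hirr : ∀ a, ¬ Relation.TransGen R a a := by
    intro a h
    rcases (Relation.transGen_iff R a a).mp h with h1 | ⟨c, hc1, hc2⟩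
    · exact hasym a a h1 h1
    · exact hPA a c (hTG a c hc1) ((hpe c a).mpr hc2)
  set r : A → A → Prop := fun a b => a = b ∨ Relation.TransGen R a b with hr
  have : IsPartialOrder A r := by
    refine { refl := ?_, trans := ?_, antisymm := ?_ }
    · exact fun a => Or.inl rfl
    · rintro a b c (rfl | h1) h2
      · exact h2
      · rcases h2 with rfl | h2
        · exact Or.inr h1
        · exact Or.inr (h1.trans h2)
    · rintro a b (rfl | h1) h2
      · rfl
      · rcases h2 with rfl | h2
        · rfl
        · exact absurd (h1.trans h2) (hirr a)
  obtain ⟨s, hs, hrs⟩ := extend_partialOrder r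
  refine ⟨fun a b => s a b ∧ a ≠ b, ⟨⟨?_, ?_, ?_, ?_⟩, ?_⟩⟩
  · rintro a b ⟨h1, h2⟩ ⟨h3, _⟩
    exact h2 (hs.toIsPartialOrder.toAntisymm.antisymm a b h1 h3)
  · rintro a b c ⟨h1, h2⟩ ⟨h3, h4⟩
    refine ⟨hs.toIsPartialOrder.toIsPreorder.toIsTrans.trans a b c h1 h3, ?_⟩
    rintro rfl
    exact h2 (hs.toIsPartialOrder.toAntisymm.antisymm a b h1 h3)
  · rintro a b c h1 h2 ⟨h3, h4⟩
    by_cases hab : a = b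
    · exact h2 (hab ▸ ⟨h3, h4⟩)
    by_cases hbc : b = c
    · exact h1 (hbc ▸ ⟨h3, h4⟩)
    rcases hs.toTotal.total a b with h5 | h5
    · exact h1 ⟨h5, hab⟩
    rcases hs.toTotal.total b c with h6 | h6
    · exact h2 ⟨h6, hbc⟩
    have : s b a := h5
    have hca : s c b := h6
    exact h4 (hs.toIsPartialOrder.toAntisymm.antisymm a c h3
      (hs.toIsPartialOrder.toIsPreorder.toIsTrans.trans c b a hca this))
  · intro a b hab
    rcases hs.toTotal.total a b with h | h
    · exact Or.inl ⟨h, hab⟩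
    · exact Or.inr ⟨h, fun he => hab he.symm⟩
  · rintro a b ⟨h1, h2⟩
    refine ⟨hrs a b (Or.inr (Relation.TransGen.single h1)), ?_⟩
    rintro rfl
    exact h2 h1

theorem stmt10 {A ι : Type*} [Fintype A] [Fintype ι] (Ri : ι → A → A → Prop)
    (f : ℕ → ℕ → ℝ)
    (hf0 : ∀ n m : ℕ, f n m ∈ Set.Icc (0:ℝ) 1)
    (hf1 : ∀ n m : ℕ, n + m ≤ Fintype.card ι → f (n+1) m > f n m)
    (hf2 : ∀ n m : ℕ, n + m ≤ Fintype.card ι → f n (m+1) < f n m)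
    (hf3 : ∀ n : ℕ, n + n ≤ Fintype.card ι → f n n = 1/2)
    (hw : ∀ i : ι, IsWeakOrder (Ri i))
    (αstar : ℝ)
    (hstar : 1/2 ≤ αstar ∧ αstar < 1 ∧ PAcyclic (Rmaj Ri f αstar))
    (hmin : ∀ β : ℝ, 1/2 ≤ β → β < 1 → PAcyclic (Rmaj Ri f β) → αstar ≤ β) :
    (∀ L : A → A → Prop,
      (∀ β : ℝ, 1/2 ≤ β → β < 1 → PAcyclic (Rmaj Ri f β) → Respects (Rmaj Ri f β) L) ↔
        Respects (Rmaj Ri f αstar) L) ∧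
    (∃ L : A → A → Prop, Respects (Rmaj Ri f αstar) L) := by
  obtain ⟨hs1, hs2, hs3⟩ := hstar
  have hcard : ∀ a b : A, Ncnt Ri a b + Ncnt Ri b a ≤ Fintype.card ι := by
    intro a b
    exact myCardLemma _ _ (fun i ⟨h1, h2⟩ => h1.2 h2.1)
  -- Rmaj α a b for α ≥ 1/2 forces strict count dominance
  have hdom : ∀ (α : ℝ), 1/2 ≤ α → ∀ a b : A, Rmaj Ri f α a b →
      Ncnt Ri b a < Ncnt Ri a b := by
    intro α hα a b h
    by_contra hle
    push_neg at hle
    have := myfhalf f (Fintype.card ι) hf2 hf3 hle (by have := hcard a b; omega)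
    exact absurd (lt_of_le_of_lt hα h) (not_lt.mpr this)
  have hasym : ∀ a b : A, Rmaj Ri f αstar a b → ¬ Rmaj Ri f αstar b a := by
    intro a b h1 h2
    have := hdom αstar hs1 a b h1
    have := hdom αstar hs1 b a h2
    omega
  constructor
  · intro L
    constructor
    · intro h
      exact h αstar hs1 hs2 hs3
    · intro h β hβ1 hβ2 hβ3
      refine ⟨h.1, fun a b hab => h.2 a b ?_⟩
      have hβα := hmin β hβ1 hβ2 hβ3
      refine ⟨lt_of_le_of_lt hβα hab.1, fun h2 => ?_⟩
      have := hdom β hβ1 a b hab.1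
      have := hdom αstar hs1 b a h2
      omega
  · exact myExtend _ hasym hs3
end

section
/- The S-order set 𝒮 = ⋂_{α∈[1/2,1)} ℛ(S(R_α)) equals ℛ(⋃_{α∈[1/2,1)} P(S(R_α))): a linear order respects the Suzumura-consistent closure S(R_α) for all α if and only if it respects the union over α of the asymmetric parts of S(R_α). -/
lemma scl_mono' {A : Type*} {R R' : A → A → Prop} (h : ∀ a b, R a b → R' a b) :
    ∀ a b, Scl R a b → Scl R' a b := by
  rintro a b (h1 | ⟨ht, h2⟩)
  · exact Or.inl (h _ _ h1)
  · exact Or.inr ⟨Relation.TransGen.mono h _ _ ht, h _ _ h2⟩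

lemma rmaj_anti {A ι : Type*} (Ri : ι → A → A → Prop) (f : ℕ → ℕ → ℝ) {α β : ℝ}
    (h : α ≤ β) : ∀ a b, Rmaj Ri f β a b → Rmaj Ri f α a b :=
  fun _ _ hb => lt_of_le_of_lt h hb

theorem stmt11 {A ι : Type*} [Fintype A] [Fintype ι] (Ri : ι → A → A → Prop)
    (f : ℕ → ℕ → ℝ)
    (hf0 : ∀ n m : ℕ, f n m ∈ Set.Icc (0:ℝ) 1)
    (hf1 : ∀ n m : ℕ, n + m ≤ Fintype.card ι → f (n+1) m > f n m)
    (hf2 : ∀ n m : ℕ, n + m ≤ Fintype.card ι → f n (m+1) < f n m)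
    (hf3 : ∀ n : ℕ, n + n ≤ Fintype.card ι → f n n = 1/2) :
    ∀ L : A → A → Prop,
      (∀ α : ℝ, 1/2 ≤ α → α < 1 → Respects (Scl (Rmaj Ri f α)) L) ↔
        Respects (fun a b => ∃ α : ℝ, 1/2 ≤ α ∧ α < 1 ∧ Pasym (Scl (Rmaj Ri f α)) a b) L := by
  intro L
  constructor
  · intro h
    obtain ⟨hL, -⟩ := h (1/2) le_rfl (by norm_num)
    refine ⟨hL, ?_⟩
    rintro a b ⟨⟨α, hα1, hα2, hP⟩, -⟩
    exact (h α hα1 hα2).2 a b hP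
  · rintro ⟨hL, hresp⟩ α hα1 hα2
    refine ⟨hL, fun a b hP => ?_⟩
    apply hresp
    refine ⟨⟨α, hα1, hα2, hP⟩, ?_⟩
    rintro ⟨β, -, -, hQ⟩
    rcases le_total α β with hle | hle
    · exact hP.2 (scl_mono' (rmaj_anti Ri f hle) _ _ hQ.1)
    · exact hQ.2 (scl_mono' (rmaj_anti Ri f hle) _ _ hP.1)
end

section
/- The relation R^π produced by the ranked pairs method is a linear order (asymmetric, complete, and transitive) for every priority ordering π. -/
def IsPathFrom {A : Type*} (R : A → A → Prop) (a b : A) (l : List A) : Prop :=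
  2 ≤ l.length ∧ l.Nodup ∧ l.head? = some a ∧ l.getLast? = some b ∧ l.Chain' R

def strengthOf {A : Type*} (Φ : A → A → ℝ) (l : List A) : ℝ :=
  ((l.zip l.tail).map fun p => Φ p.1 p.2).foldr min 1

noncomputable def Bval {A : Type*} (R : A → A → Prop) (Φ : A → A → ℝ) (a b : A) : ℝ :=
  sSup {s : ℝ | ∃ l : List A, IsPathFrom R a b l ∧ strengthOf Φ l = s}

open Classical in
noncomputable def rpStep {A : Type*} (prev : A → A → Prop) (p : A × A) : A → A → Prop :=
  if p.1 = p.2 ∨ (∃ l : List A, IsPathFrom prev p.2 p.1 l) then prev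
  else fun x y => prev x y ∨ (x = p.1 ∧ y = p.2)

noncomputable def rpAux {A : Type*} {n : ℕ} (π : A × A ≃ Fin n) : ℕ → (A → A → Prop)
  | 0 => fun _ _ => False
  | (z+1) => if h : z < n then rpStep (rpAux π z) (π.symm ⟨z, h⟩) else rpAux π z

noncomputable def rpRel {A : Type*} {n : ℕ} (π : A × A ≃ Fin n) : A → A → Prop :=
  rpAux π n

section RPHelpers
open Relation List

variable {A : Type*}

lemma chain_getLast_transGen {R : A → A → Prop} :
    ∀ (l : List A) (a b : A), List.Chain R a l → l ≠ [] →
      (a :: l).getLast? = some b → Relation.TransGen R a b := by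
  intro l
  induction l with
  | nil => intro a b _ h; exact absurd rfl h
  | cons x l2 ih =>
    intro a b hc _ hlast
    rcases List.chain_cons.mp hc with ⟨hax, hcx⟩
    cases l2 with
    | nil =>
      simp only [List.getLast?_cons_cons, List.getLast?_singleton, Option.some.injEq] at hlast
      subst hlast
      exact Relation.TransGen.single hax
    | cons y l3 =>
      have := ih x b hcx (by simp) (by simpa using hlast)
      exact Relation.TransGen.head hax this

lemma pathFrom_transGen {R : A → A → Prop} {a b : A} {l : List A}
    (h : IsPathFrom R a b l) : Relation.TransGen R a b ∧ a ≠ b := by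
  obtain ⟨hlen, hnd, hhd, hlast, hch⟩ := h
  cases l with
  | nil => simp at hhd
  | cons x l' =>
    simp only [List.head?_cons, Option.some.injEq] at hhd
    subst hhd
    cases l' with
    | nil => simp at hlen
    | cons y l2 =>
      have hchain : List.Chain R x (y :: l2) := hch
      refine ⟨chain_getLast_transGen (y :: l2) x b hchain (by simp) hlast, ?_⟩
      have hb : b ∈ (y :: l2) := by
        rw [List.getLast?_cons_cons] at hlast
        exact List.mem_of_mem_getLast? hlast
      have : x ∉ (y :: l2) := (List.nodup_cons.mp hnd).1
      intro hxb; subst hxb; exact this hb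

lemma transGen_path {R : A → A → Prop} {a b : A}
    (h : Relation.TransGen R a b) : a ≠ b → ∃ l, IsPathFrom R a b l := by
  induction h with
  | single hab =>
    rename_i c
    intro hne
    exact ⟨[a, c], by simp, by simp [hne], rfl, rfl, List.Chain.cons hab List.Chain.nil⟩
  | tail hab hbc ih =>
    rename_i b' c'
    intro hne
    by_cases hab' : a = b'
    · subst hab'
      exact ⟨[a, c'], by simp, by simp [hne], rfl, rfl, List.Chain.cons hbc List.Chain.nil⟩
    · obtain ⟨l, hlen, hnd, hhd, hlast, hch⟩ := ih hab'
      by_cases hc : c' ∈ l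
      · obtain ⟨s, t, rfl⟩ := List.append_of_mem hc
        have hpre : (s ++ [c']) <+: (s ++ c' :: t) := ⟨t, by simp⟩
        have hs : s ≠ [] := by
          rintro rfl
          simp only [List.nil_append, List.head?_cons, Option.some.injEq] at hhd
          exact hne hhd.symm
        refine ⟨s ++ [c'], ?_, hnd.sublist hpre.sublist, ?_, List.getLast?_concat,
          hch.prefix hpre⟩
        · cases s with
          | nil => exact absurd rfl hs
          | cons u s' => simp
        · cases s with
          | nil => exact absurd rfl hs
          | cons u s' => simpa using hhd
      · have hlne : l ≠ [] := by rintro rfl; simp at hlen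
        refine ⟨l ++ [c'], by simp; omega, ?_, ?_, List.getLast?_concat, ?_⟩
        · simp [List.nodup_append, hnd, hc]
          intro x hx hxc; exact hc (hxc ▸ hx)
        · rw [List.head?_append, hhd]; rfl
        · refine List.isChain_append.mpr ?_
          refine ⟨hch, by simp, ?_⟩
          intro x hx y hy
          simp only [List.head?_cons, Option.mem_def, Option.some.injEq] at hy
          subst hy
          rw [Option.mem_def, hlast] at hx
          cases hx
          exact hbc

lemma transGen_union {R : A → A → Prop} {u v x y : A}
    (h : Relation.TransGen (fun a b => R a b ∨ (a = u ∧ b = v)) x y) :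
    Relation.TransGen R x y ∨
      (Relation.ReflTransGen R x u ∧ Relation.ReflTransGen R v y) := by
  induction h with
  | single hxy =>
    rcases hxy with h | ⟨rfl, rfl⟩
    · exact Or.inl (Relation.TransGen.single h)
    · exact Or.inr ⟨Relation.ReflTransGen.refl, Relation.ReflTransGen.refl⟩
  | tail hxb hbc ih =>
    rcases hbc with h | ⟨rfl, rfl⟩
    · rcases ih with h' | ⟨h1, h2⟩
      · exact Or.inl (h'.tail h)
      · exact Or.inr ⟨h1, h2.tail h⟩
    · rcases ih with h' | ⟨h1, _⟩
      · exact Or.inr ⟨h'.to_reflTransGen, Relation.ReflTransGen.refl⟩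
      · exact Or.inr ⟨h1, Relation.ReflTransGen.refl⟩

variable {n : ℕ} (π : A × A ≃ Fin n)

lemma rpAux_succ (z : ℕ) :
    rpAux π (z + 1) = if h : z < n then rpStep (rpAux π z) (π.symm ⟨z, h⟩) else rpAux π z := rfl

lemma rpAux_succ_mono (z : ℕ) {a b : A} (h : rpAux π z a b) : rpAux π (z + 1) a b := by
  rw [rpAux_succ]
  split
  · rw [rpStep]
    split
    · exact h
    · exact Or.inl h
  · exact h

lemma rpAux_mono {z z' : ℕ} (hz : z ≤ z') {a b : A} (h : rpAux π z a b) :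
    rpAux π z' a b := by
  induction hz with
  | refl => exact h
  | step _ ih => exact rpAux_succ_mono π _ (by exact ih)

lemma rpAux_acyclic (z : ℕ) : ∀ a : A, ¬ Relation.TransGen (rpAux π z) a a := by
  induction z with
  | zero =>
    intro a h
    cases h with
    | single h => exact h
    | tail _ h => exact h
  | succ z ih =>
    intro a ha
    rw [rpAux_succ] at ha
    split at ha
    · rw [rpStep] at ha
      split at ha
      · exact ih a ha
      · rename_i hcond
        push_neg at hcond
        obtain ⟨hne, hnopath⟩ := hcond
        rcases transGen_union ha with h' | ⟨h1, h2⟩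
        · exact ih a h'
        · have hvu : Relation.ReflTransGen (rpAux π z) _ _ := h2.trans h1
          rcases Relation.reflTransGen_iff_eq_or_transGen.mp hvu with heq | htg
          · exact hne heq
          · obtain ⟨l, hl⟩ := transGen_path htg (Ne.symm hne)
            exact hnopath l hl
    · exact ih a ha

lemma rpRel_acyclic (a : A) : ¬ Relation.TransGen (rpRel π) a a :=
  rpAux_acyclic π n a

lemma rpAux_decided (a b : A) (hab : a ≠ b) :
    rpRel π a b ∨ Relation.TransGen (rpRel π) b a := by
  have hzn : ((π (a, b)).val : ℕ) < n := (π (a, b)).isLt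
  have hsymm : π.symm ⟨(π (a, b)).val, hzn⟩ = (a, b) := by
    rw [Fin.eta]
    exact π.symm_apply_apply _
  have hstep : rpAux π ((π (a, b)).val + 1) = rpStep (rpAux π (π (a, b)).val) (a, b) := by
    rw [rpAux_succ, dif_pos hzn, hsymm]
  by_cases hc : (a = b ∨ ∃ l : List A, IsPathFrom (rpAux π (π (a, b)).val) b a l)
  · rcases hc with h | ⟨l, hl⟩
    · exact absurd h hab
    · right
      exact Relation.TransGen.mono (fun x y h => rpAux_mono π (le_of_lt hzn) h) _ _ (pathFrom_transGen hl).1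
  · left
    have : rpAux π ((π (a, b)).val + 1) a b := by
      rw [hstep, rpStep, if_neg hc]
      exact Or.inr ⟨rfl, rfl⟩
    exact rpAux_mono π hzn this

end RPHelpers

theorem stmt12 {A ι : Type*} [Fintype A] [Fintype ι] (Ri : ι → A → A → Prop)
    (f : ℕ → ℕ → ℝ)
    (hf0 : ∀ n m : ℕ, f n m ∈ Set.Icc (0:ℝ) 1)
    (hf1 : ∀ n m : ℕ, n + m ≤ Fintype.card ι → f (n+1) m > f n m)
    (hf2 : ∀ n m : ℕ, n + m ≤ Fintype.card ι → f n (m+1) < f n m)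
    (hf3 : ∀ n : ℕ, n + n ≤ Fintype.card ι → f n n = 1/2)
    (π : A × A ≃ Fin (Fintype.card (A × A)))
    (hπ : ∀ p q : A × A, PhiFn Ri f p.1 p.2 > PhiFn Ri f q.1 q.2 → π p < π q) :
    IsLinearRel (rpRel π) := by
  have hacyc := rpRel_acyclic π
  have hasym : ∀ a b : A, rpRel π a b → ¬ rpRel π b a := by
    intro a b hab hba
    exact hacyc a ((Relation.TransGen.single hab).tail hba)
  have hcomp : ∀ a b : A, a ≠ b → rpRel π a b ∨ rpRel π b a := by
    intro a b hab
    rcases rpAux_decided π a b hab with h | htg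
    · exact Or.inl h
    · rcases rpAux_decided π b a hab.symm with h | htg'
      · exact Or.inr h
      · exact absurd (htg.trans htg') (hacyc b)
  have htrans : ∀ a b c : A, rpRel π a b → rpRel π b c → rpRel π a c := by
    intro a b c hab hbc
    have hac : a ≠ c := by
      rintro rfl
      exact hacyc a ((Relation.TransGen.single hab).tail hbc)
    rcases rpAux_decided π a c hac with h | htg
    · exact h
    · exact absurd ((htg.tail hab).tail hbc) (hacyc c)
  refine ⟨hasym, htrans, ?_, hcomp⟩
  intro a b c hnab hnbc hac
  by_cases hab : a = b
  · exact hnbc (hab ▸ hac)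
  by_cases hbc : b = c
  · exact hnab (hbc ▸ hac)
  rcases hcomp a b hab with h | hba
  · exact hnab h
  rcases hcomp b c hbc with h | hcb
  · exact hnbc h
  exact hasym a c hac (htrans c b a hcb hba)
end

section
/- Every linear order R^π produced by the ranked pairs method belongs to the S-order set: ⋃_{α∈[1/2,1)} P(S(R_α)) ⊆ R^π, i.e., R^π respects the Suzumura-consistent closure of every supermajority relation R_α. -/
lemma rpStep_mono {A : Type*} (prev : A → A → Prop) (p : A × A) (x y : A)
    (h : prev x y) : rpStep prev p x y := by
  unfold rpStep; split_ifs with h'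
  · exact h
  · exact Or.inl h

lemma rpAux_mono_s13 {A : Type*} {n : ℕ} (π : A × A ≃ Fin n) {z w : ℕ} (hzw : z ≤ w)
    (x y : A) (h : rpAux π z x y) : rpAux π w x y := by
  induction hzw with
  | refl => exact h
  | @step m hm ih =>
    show rpAux π (m+1) x y
    unfold rpAux
    split
    · exact rpStep_mono _ _ _ _ ih
    · exact ih

lemma rpAux_lt {A : Type*} {n : ℕ} (π : A × A ≃ Fin n) :
    ∀ z (x y : A), rpAux π z x y → ((π (x, y) : Fin n) : ℕ) < z := by
  intro z
  induction z with
  | zero => intro x y h; exact absurd h (by simp [rpAux])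
  | succ z ih =>
    intro x y h
    unfold rpAux at h
    split at h
    · rename_i hz
      unfold rpStep at h
      split_ifs at h with h'
      · exact Nat.lt_succ_of_lt (ih x y h)
      · rcases h with h | ⟨hx, hy⟩
        · exact Nat.lt_succ_of_lt (ih x y h)
        · have : (x, y) = π.symm ⟨z, hz⟩ := Prod.ext hx hy
          rw [this, Equiv.apply_symm_apply]
          exact Nat.lt_succ_self z
    · exact Nat.lt_succ_of_lt (ih x y h)

lemma chain_transGen {A : Type*} {R : A → A → Prop} :
    ∀ (l : List A) (b a : A), List.Chain R b l → l.getLast? = some a →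
      Relation.TransGen R b a := by
  intro l
  induction l with
  | nil => simp
  | cons c l ih =>
    intro b a hc hl
    cases hc with
    | cons_cons hbc hcl =>
      cases l with
      | nil =>
        simp at hl; subst hl; exact .single hbc
      | cons d l' =>
        exact (ih c a hcl (by simpa using hl)).head hbc

lemma path_transGen {A : Type*} {R : A → A → Prop} {a b : A} {l : List A}
    (h : IsPathFrom R a b l) : Relation.TransGen R a b := by
  obtain ⟨hlen, _, hhd, hlast, hch⟩ := h
  cases l with
  | nil => simp at hhd
  | cons c t =>
    simp at hhd; subst hhd
    cases t with
    | nil => simp at hlen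
    | cons d t' =>
      exact chain_transGen (d :: t') _ b hch (by simpa using hlast)

theorem stmt13 {A ι : Type*} [Fintype A] [Fintype ι] (Ri : ι → A → A → Prop)
    (f : ℕ → ℕ → ℝ)
    (hf0 : ∀ n m : ℕ, f n m ∈ Set.Icc (0:ℝ) 1)
    (hf1 : ∀ n m : ℕ, n + m ≤ Fintype.card ι → f (n+1) m > f n m)
    (hf2 : ∀ n m : ℕ, n + m ≤ Fintype.card ι → f n (m+1) < f n m)
    (hf3 : ∀ n : ℕ, n + n ≤ Fintype.card ι → f n n = 1/2)
    (π : A × A ≃ Fin (Fintype.card (A × A)))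
    (hπ : ∀ p q : A × A, PhiFn Ri f p.1 p.2 > PhiFn Ri f q.1 q.2 → π p < π q) :
    ∀ a b : A,
      (∃ α : ℝ, 1/2 ≤ α ∧ α < 1 ∧ Pasym (Scl (Rmaj Ri f α)) a b) → rpRel π a b := by
  intro a b h
  obtain ⟨α, hα, -, h1, h2⟩ := h
  have hnba : ¬ Rmaj Ri f α b a := fun h => h2 (Or.inl h)
  have hab : Rmaj Ri f α a b := by
    rcases h1 with h | ⟨_, h⟩
    · exact h
    · exact absurd h hnba
  have hnT : ¬ Relation.TransGen (Rmaj Ri f α) b a := fun h => h2 (Or.inr ⟨h, hab⟩)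
  have hab' : PhiFn Ri f a b > α := hab
  have hne : a ≠ b := by
    rintro rfl
    have h0 : Ncnt Ri a a = 0 := by
      have : IsEmpty {i // Pasym (Ri i) a a} := ⟨fun ⟨_, hi⟩ => hi.2 hi.1⟩
      exact Nat.card_of_isEmpty
    have hhalf : PhiFn Ri f a a = 1/2 := by
      rw [PhiFn, h0]; exact hf3 0 (by omega)
    rw [hhalf] at hab'
    linarith
  set k : Fin (Fintype.card (A × A)) := π (a, b) with hk
  have hprev : ∀ x y, rpAux π (k : ℕ) x y → Rmaj Ri f α x y := by
    intro x y hxy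
    have hlt := rpAux_lt π (k : ℕ) x y hxy
    by_contra hnR
    have hle : PhiFn Ri f x y ≤ α := not_lt.mp hnR
    have hgt : PhiFn Ri f (a, b).1 (a, b).2 > PhiFn Ri f (x, y).1 (x, y).2 :=
      lt_of_le_of_lt hle hab'
    have hlt2 : ((π (a, b) : Fin _) : ℕ) < ((π (x, y) : Fin _) : ℕ) := hπ (a, b) (x, y) hgt
    rw [← hk] at hlt2
    omega
  have hstep : rpAux π ((k : ℕ) + 1) a b := by
    unfold rpAux
    rw [dif_pos k.isLt]
    have hsymm : π.symm ⟨(k : ℕ), k.isLt⟩ = (a, b) := by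
      simp only [Fin.eta, hk, Equiv.symm_apply_apply]
    rw [hsymm]
    unfold rpStep
    rw [if_neg]
    · exact Or.inr ⟨rfl, rfl⟩
    · rintro (h | ⟨l, hl⟩)
      · exact hne h
      · exact hnT (Relation.TransGen.mono hprev _ _ (path_transGen hl))
  exact rpAux_mono_s13 π (Nat.succ_le_of_lt k.isLt) a b hstep
end

section
/- The binary relation R^{Sc} of the Schulze method equals the union over α ∈ [1/2,1) of the asymmetric parts of the transitive closures of the supermajority relations: R^{Sc} = ⋃_{α∈[1/2,1)} P(T(R_α)). -/
section SchulzeAux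

variable {A : Type*}

private lemma foldr_min_le_one (L : List ℝ) : L.foldr min 1 ≤ 1 := by
  induction L with
  | nil => simp
  | cons x t ih => exact le_trans (min_le_right _ _) ih

private lemma foldr_min_le {L : List ℝ} {x : ℝ} (h : x ∈ L) : L.foldr min 1 ≤ x := by
  induction L with
  | nil => simp at h
  | cons y t ih =>
    rcases List.mem_cons.mp h with rfl | h'
    · exact min_le_left _ _
    · exact le_trans (min_le_right _ _) (ih h')

private lemma lt_foldr_min {α : ℝ} (hα : α < 1) {L : List ℝ} (h : ∀ x ∈ L, α < x) :
    α < L.foldr min 1 := by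
  induction L with
  | nil => simpa
  | cons y t ih =>
    exact lt_min (h y List.mem_cons_self) (ih fun x hx => h x (List.mem_cons_of_mem _ hx))

private lemma chain'_iff_pairs {R : A → A → Prop} (l : List A) :
    l.Chain' R ↔ ∀ p ∈ l.zip l.tail, R p.1 p.2 := by
  induction l with
  | nil => simp [List.Chain']
  | cons x t ih =>
    cases t with
    | nil => simp [List.Chain']
    | cons y t' =>
      simp only [List.Chain'] at *
      rw [List.isChain_cons_cons]
      simp only [List.tail_cons, List.zip_cons_cons, List.mem_cons] at *
      constructor
      · rintro ⟨h1, h2⟩ p hp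
        rcases hp with rfl | hp'
        · exact h1
        · exact (ih.mp h2) p hp'
      · intro h
        exact ⟨h (x, y) (Or.inl rfl), ih.mpr fun p hp => h p (Or.inr hp)⟩

private lemma transGen_of_list {R : A → A → Prop} :
    ∀ (l : List A) (a b : A), l.head? = some a → l.getLast? = some b →
      2 ≤ l.length → l.Chain' R → Relation.TransGen R a b := by
  intro l
  induction l with
  | nil => intro a b ha; simp at ha
  | cons x t ih =>
    intro a b ha hb hlen hch
    cases t with
    | nil => simp at hlen
    | cons y t' =>
      simp only [List.head?_cons, Option.some.injEq] at ha
      subst ha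
      simp only [List.Chain', List.isChain_cons_cons] at hch
      cases t' with
      | nil =>
        simp only [List.getLast?_cons_cons, List.getLast?_singleton, Option.some.injEq] at hb
        subst hb
        exact Relation.TransGen.single hch.1
      | cons z t'' =>
        rw [List.getLast?_cons_cons] at hb
        exact Relation.TransGen.head hch.1 (ih y b rfl hb (by simp) hch.2)

private lemma list_of_transGen {R : A → A → Prop} {a b : A} (h : Relation.TransGen R a b) :
    ∃ l : List A, 2 ≤ l.length ∧ l.head? = some a ∧ l.getLast? = some b ∧ l.Chain' R := by
  induction h with
  | single hr => exact ⟨[a, _], by simp, rfl, rfl, by simp [List.Chain', hr]⟩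
  | @tail c d hac hcd ih =>
    obtain ⟨l, hlen, hh, hl, hc⟩ := ih
    have hnil : l ≠ [] := by rintro rfl; simp at hlen
    refine ⟨l ++ [d], ?_, ?_, ?_, ?_⟩
    · simp only [List.length_append, List.length_singleton]; omega
    · rw [List.head?_append_of_ne_nil _ hnil]; exact hh
    · simp [List.getLast?_concat]
    · refine List.IsChain.append hc (List.isChain_singleton _) ?_
      intro u hu v hv
      rw [hl] at hu
      simp only [Option.mem_def, Option.some.injEq] at hu
      simp only [List.head?_cons, Option.mem_def, Option.some.injEq] at hv
      subst hu; subst hv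
      exact hcd

private lemma exists_dup_decomp {l : List A} (h : ¬ l.Nodup) :
    ∃ (x : A) (l₁ l₂ l₃ : List A), l = l₁ ++ x :: (l₂ ++ x :: l₃) := by
  induction l with
  | nil => simp at h
  | cons y t ih =>
    rw [List.nodup_cons] at h
    by_cases hy : y ∈ t
    · obtain ⟨l₂, l₃, rfl⟩ := List.append_of_mem hy
      exact ⟨y, [], l₂, l₃, rfl⟩
    · have ht : ¬ t.Nodup := fun hn => h ⟨hy, hn⟩
      obtain ⟨x, l₁, l₂, l₃, rfl⟩ := ih ht
      exact ⟨x, y :: l₁, l₂, l₃, rfl⟩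

private lemma exists_path_of_list {R : A → A → Prop} :
    ∀ (n : ℕ) (l : List A), l.length ≤ n → ∀ a b : A, a ≠ b →
      l.head? = some a → l.getLast? = some b → 2 ≤ l.length → l.Chain' R →
      ∃ l', IsPathFrom R a b l' := by
  intro n
  induction n with
  | zero => intro l hl a b _ _ _ hlen _; omega
  | succ n ih =>
    intro l hl a b hab hh hb hlen hch
    by_cases hnd : l.Nodup
    · exact ⟨l, hlen, hnd, hh, hb, hch⟩
    · obtain ⟨x, l₁, l₂, l₃, rfl⟩ := exists_dup_decomp hnd
      have hhead : (l₁ ++ x :: l₃).head? = some a := by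
        cases l₁ with
        | nil => simpa using hh
        | cons u t => simpa using hh
      have hlast : (l₁ ++ x :: l₃).getLast? = some b := by
        rw [List.getLast?_append_cons]
        rw [List.getLast?_append_cons,
          show x :: (l₂ ++ x :: l₃) = (x :: l₂) ++ x :: l₃ from by simp,
          List.getLast?_append_cons] at hb
        exact hb
      have hch' : (l₁ ++ x :: l₃).Chain' R := by
        simp only [List.Chain', List.isChain_append] at hch
        obtain ⟨h1, h2, h3⟩ := hch
        have h2' : (x :: l₃).Chain' R := by
          have h2'' : ((x :: l₂) ++ x :: l₃).Chain' R := by simpa [List.Chain'] using h2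
          exact (List.isChain_append.mp h2'').2.1
        exact List.isChain_append.mpr ⟨h1, h2', fun u hu v hv => h3 u hu v (by simpa using hv)⟩
      have hlen' : 2 ≤ (l₁ ++ x :: l₃).length := by
        by_contra hcon
        push_neg at hcon
        simp only [List.length_append, List.length_cons] at hcon
        have h1 : l₁ = [] := List.length_eq_zero_iff.mp (by omega)
        have h3 : l₃ = [] := List.length_eq_zero_iff.mp (by omega)
        subst h1; subst h3
        simp only [List.nil_append, List.head?_cons, Option.some.injEq] at hhead
        simp only [List.nil_append, List.getLast?_singleton, Option.some.injEq] at hlast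
        exact hab (hhead ▸ hlast ▸ rfl)
      have hle : (l₁ ++ x :: l₃).length ≤ n := by
        have hlt : (l₁ ++ x :: l₃).length < (l₁ ++ x :: (l₂ ++ x :: l₃)).length := by
          simp only [List.length_append, List.length_cons]
          omega
        omega
      exact ih (l₁ ++ x :: l₃) hle a b hab hhead hlast hlen' hch'

private lemma exists_path_of_transGen {R : A → A → Prop} {a b : A} (hab : a ≠ b)
    (h : Relation.TransGen R a b) : ∃ l, IsPathFrom R a b l := by
  obtain ⟨l, hlen, hh, hl, hc⟩ := list_of_transGen h
  exact exists_path_of_list l.length l le_rfl a b hab hh hl hlen hc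

private lemma strength_le_one (Φ : A → A → ℝ) (l : List A) : strengthOf Φ l ≤ 1 :=
  foldr_min_le_one _

private lemma strength_le (Φ : A → A → ℝ) {l : List A} {p : A × A} (hp : p ∈ l.zip l.tail) :
    strengthOf Φ l ≤ Φ p.1 p.2 :=
  foldr_min_le (List.mem_map_of_mem hp)

private lemma lt_strength {Φ : A → A → ℝ} {α : ℝ} (hα : α < 1) {l : List A}
    (h : ∀ p ∈ l.zip l.tail, α < Φ p.1 p.2) : α < strengthOf Φ l := by
  apply lt_foldr_min hα
  intro s hs
  obtain ⟨p, hp, rfl⟩ := List.mem_map.mp hs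
  exact h p hp

private lemma schulze_aux {A : Type*} [Fintype A] (Φ : A → A → ℝ)
    (a b : A) :
    (Bval (fun x y => Φ x y > 1/2) Φ a b > Bval (fun x y => Φ x y > 1/2) Φ b a) ↔
      ∃ α : ℝ, 1/2 ≤ α ∧ α < 1 ∧
        (Relation.TransGen (fun x y => Φ x y > α) a b ∧
          ¬ Relation.TransGen (fun x y => Φ x y > α) b a) := by
  set R2 : A → A → Prop := fun x y => Φ x y > 1/2 with hR2
  have hfin : ∀ x y : A, {s : ℝ | ∃ l, IsPathFrom R2 x y l ∧ strengthOf Φ l = s}.Finite := by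
    intro x y
    apply ((List.finite_length_le A (Fintype.card A)).image (strengthOf Φ)).subset
    rintro s ⟨l, ⟨_, hnd, _, _, _⟩, rfl⟩
    exact ⟨l, hnd.length_le_card, rfl⟩
  have hSel : ∀ (x y : A) (s : ℝ),
      (∃ l, IsPathFrom R2 x y l ∧ strengthOf Φ l = s) → 1/2 < s ∧ s ≤ 1 := by
    rintro x y s ⟨l, ⟨_, _, _, _, hch⟩, rfl⟩
    exact ⟨lt_strength one_half_lt_one fun p hp => (chain'_iff_pairs l).mp hch p hp,
      strength_le_one Φ l⟩
  have hB_nonneg : ∀ x y : A, 0 ≤ Bval R2 Φ x y := by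
    intro x y
    rcases Set.eq_empty_or_nonempty
        {s : ℝ | ∃ l, IsPathFrom R2 x y l ∧ strengthOf Φ l = s} with he | hne
    · show (0:ℝ) ≤ sSup _
      rw [he, Real.sSup_empty]
    · have hmem := hne.csSup_mem (hfin x y)
      have hp := hSel x y _ hmem
      show (0:ℝ) ≤ sSup _
      linarith [hp.1]
  constructor
  · intro h
    have hab : a ≠ b := by rintro rfl; exact lt_irrefl _ h
    have hne : {s : ℝ | ∃ l, IsPathFrom R2 a b l ∧ strengthOf Φ l = s}.Nonempty := by
      by_contra hc
      rw [Set.not_nonempty_iff_eq_empty] at hc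
      have h0 : Bval R2 Φ a b = 0 := by show sSup _ = 0; rw [hc, Real.sSup_empty]
      rw [h0] at h
      exact absurd h (not_lt.mpr (hB_nonneg b a))
    obtain ⟨l, hl, hsl⟩ := hne.csSup_mem (hfin a b)
    have hs_props := hSel a b _ ⟨l, hl, hsl⟩
    set α : ℝ := max (1/2) (Bval R2 Φ b a) with hαdef
    have hαlt : α < Bval R2 Φ a b := max_lt hs_props.1 h
    have hα2 : α < 1 := lt_of_lt_of_le hαlt hs_props.2
    have hT : Relation.TransGen (fun x y => Φ x y > α) a b := by
      obtain ⟨hlen, hnd, hh, hlast, hch⟩ := hl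
      apply transGen_of_list l a b hh hlast hlen
      rw [chain'_iff_pairs]
      intro p hp
      have h1 := strength_le Φ hp
      have h2 : α < strengthOf Φ l := by rw [hsl]; exact hαlt
      exact lt_of_lt_of_le h2 h1
    have hhalf : (1/2 : ℝ) ≤ α := by rw [hαdef]; exact le_max_left _ _
    have hnT : ¬ Relation.TransGen (fun x y => Φ x y > α) b a := by
      intro hT'
      obtain ⟨l', hlen', hnd', hh', hlast', hch'⟩ := exists_path_of_transGen (Ne.symm hab) hT'
      have hch2 : l'.Chain' R2 := List.IsChain.imp (fun ⦃x y⦄ hxy => lt_of_le_of_lt hhalf hxy) hch'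
      have hmem : strengthOf Φ l' ∈
          {s : ℝ | ∃ l'', IsPathFrom R2 b a l'' ∧ strengthOf Φ l'' = s} :=
        ⟨l', ⟨hlen', hnd', hh', hlast', hch2⟩, rfl⟩
      have hle : strengthOf Φ l' ≤ Bval R2 Φ b a := le_csSup (hfin b a).bddAbove hmem
      have hgt : α < strengthOf Φ l' :=
        lt_strength hα2 fun p hp => (chain'_iff_pairs l').mp hch' p hp
      have hBα : Bval R2 Φ b a ≤ α := by rw [hαdef]; exact le_max_right _ _
      linarith
    exact ⟨α, hhalf, hα2, hT, hnT⟩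
  · rintro ⟨α, hα1, hα2, hTab, hnTba⟩
    have hab : a ≠ b := by rintro rfl; exact hnTba hTab
    obtain ⟨l, hlen, hnd, hh, hlast, hch⟩ := exists_path_of_transGen hab hTab
    have hch2 : l.Chain' R2 := List.IsChain.imp (fun ⦃x y⦄ hxy => lt_of_le_of_lt hα1 hxy) hch
    have hmem : strengthOf Φ l ∈
        {s : ℝ | ∃ l', IsPathFrom R2 a b l' ∧ strengthOf Φ l' = s} :=
      ⟨l, ⟨hlen, hnd, hh, hlast, hch2⟩, rfl⟩
    have h1 : α < strengthOf Φ l :=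
      lt_strength hα2 fun p hp => (chain'_iff_pairs l).mp hch p hp
    have h2 : strengthOf Φ l ≤ Bval R2 Φ a b := le_csSup (hfin a b).bddAbove hmem
    have h3 : Bval R2 Φ b a ≤ α := by
      rcases Set.eq_empty_or_nonempty
          {s : ℝ | ∃ l', IsPathFrom R2 b a l' ∧ strengthOf Φ l' = s} with he | hne
      · show sSup _ ≤ α
        rw [he, Real.sSup_empty]; linarith
      · apply csSup_le hne
        rintro s ⟨l', ⟨hlen', hnd', hh', hlast', hch'⟩, rfl⟩
        by_contra hcon
        push_neg at hcon
        apply hnTba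
        apply transGen_of_list l' b a hh' hlast' hlen'
        rw [chain'_iff_pairs]
        intro p hp
        exact lt_of_lt_of_le hcon (strength_le Φ hp)
    linarith

end SchulzeAux

theorem stmt15 {A ι : Type*} [Fintype A] [Fintype ι] (Ri : ι → A → A → Prop)
    (f : ℕ → ℕ → ℝ)
    (hf0 : ∀ n m : ℕ, f n m ∈ Set.Icc (0:ℝ) 1)
    (hf1 : ∀ n m : ℕ, n + m ≤ Fintype.card ι → f (n+1) m > f n m)
    (hf2 : ∀ n m : ℕ, n + m ≤ Fintype.card ι → f n (m+1) < f n m)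
    (hf3 : ∀ n : ℕ, n + n ≤ Fintype.card ι → f n n = 1/2) :
    ∀ a b : A,
      (Bval (Rmaj Ri f (1/2)) (PhiFn Ri f) a b > Bval (Rmaj Ri f (1/2)) (PhiFn Ri f) b a) ↔
        ∃ α : ℝ, 1/2 ≤ α ∧ α < 1 ∧ Pasym (Relation.TransGen (Rmaj Ri f α)) a b := by
  intro a b
  exact schulze_aux (PhiFn Ri f) a b
end

section
/- If B[b,a] ∈ [1/2,1), then there is no path from b to a in the supermajority relation R_{B[b,a]}; and if additionally B[a,b] > B[b,a], then there is a path from a to b in R_{B[b,a]}. -/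
/-!
A path of strength greater than `β` is exactly a path all of whose steps have weight greater than
`β` (provided `β < 1`, the value `strengthOf` assigns to a path without steps). Since `B[b,a]` is
the supremum of the strengths of the paths from `b` to `a` in `R_{1/2}`, and every path in `R_β`
with `β ≥ 1/2` is one of them, no path in `R_β` with `β = B[b,a]` can lead from `b` to `a`. If
`B[a,b] > β`, some path from `a` to `b` has strength above `β`, so it is a path in `R_β`.
-/

section Strength

variable {A : Type*} (Φ : A → A → ℝ)

@[simp]
lemma strengthOf_nil : strengthOf Φ [] = 1 := rfl

@[simp]
lemma strengthOf_singleton (x : A) : strengthOf Φ [x] = 1 := rfl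

@[simp]
lemma strengthOf_cons_cons (x y : A) (l : List A) :
    strengthOf Φ (x :: y :: l) = min (Φ x y) (strengthOf Φ (y :: l)) := rfl

lemma lt_strengthOf_iff (β : ℝ) (l : List A) :
    β < strengthOf Φ l ↔ β < 1 ∧ l.IsChain (fun x y => β < Φ x y) := by
  induction l using List.twoStepInduction with
  | nil => simp
  | singleton x => simp
  | cons_cons x y l _ ih =>
    simp only [strengthOf_cons_cons, lt_min_iff, ih, List.isChain_cons_cons]
    tauto

lemma strengthOf_le_one (l : List A) : strengthOf Φ l ≤ 1 :=
  not_lt.mp fun h => lt_irrefl _ ((lt_strengthOf_iff Φ 1 l).mp h).1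

end Strength

lemma IsPathFrom.mono {A : Type*} {R S : A → A → Prop} (hRS : ∀ x y, R x y → S x y) {a b : A}
    {l : List A} (hl : IsPathFrom R a b l) : IsPathFrom S a b l :=
  ⟨hl.1, hl.2.1, hl.2.2.1, hl.2.2.2.1, hl.2.2.2.2.imp fun x y => hRS x y⟩

section Bval

variable {A : Type*} (R : A → A → Prop) (Φ : A → A → ℝ) {a b : A}

lemma strengthOf_le_bval {l : List A} (hl : IsPathFrom R a b l) :
    strengthOf Φ l ≤ Bval R Φ a b :=
  le_csSup ⟨1, by rintro _ ⟨l, -, rfl⟩; exact strengthOf_le_one Φ l⟩ ⟨l, hl, rfl⟩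

/-- The hypothesis `0 ≤ β` rules out the case without paths, where `Bval` is `sSup ∅ = 0`. -/
lemma exists_isPathFrom_lt_strengthOf {β : ℝ} (hβ : 0 ≤ β) (h : β < Bval R Φ a b) :
    ∃ l, IsPathFrom R a b l ∧ β < strengthOf Φ l := by
  by_contra! hle
  refine h.not_ge (Real.sSup_le ?_ hβ)
  rintro _ ⟨l, hl, rfl⟩
  exact hle l hl

end Bval

theorem stmt16_general {A ι : Type*} (Ri : ι → A → A → Prop)
    (f : ℕ → ℕ → ℝ)
    (a b : A)
    (hB1 : 1/2 ≤ Bval (Rmaj Ri f (1/2)) (PhiFn Ri f) b a)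
    (hB2 : Bval (Rmaj Ri f (1/2)) (PhiFn Ri f) b a < 1) :
    (¬ ∃ l : List A, IsPathFrom (Rmaj Ri f (Bval (Rmaj Ri f (1/2)) (PhiFn Ri f) b a)) b a l) ∧
    (Bval (Rmaj Ri f (1/2)) (PhiFn Ri f) a b > Bval (Rmaj Ri f (1/2)) (PhiFn Ri f) b a →
      ∃ l : List A, IsPathFrom (Rmaj Ri f (Bval (Rmaj Ri f (1/2)) (PhiFn Ri f) b a)) a b l) := by
  set β := Bval (Rmaj Ri f (1/2)) (PhiFn Ri f) b a
  constructor
  · rintro ⟨l, hl⟩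
    have hstrength : β < strengthOf (PhiFn Ri f) l :=
      (lt_strengthOf_iff _ β l).mpr ⟨hB2, hl.2.2.2.2⟩
    have hhalf : IsPathFrom (Rmaj Ri f (1/2)) b a l :=
      hl.mono fun x y hxy => hB1.trans_lt hxy
    exact hstrength.not_ge (strengthOf_le_bval _ _ hhalf)
  · intro hab
    obtain ⟨l, hl, hstrength⟩ :=
      exists_isPathFrom_lt_strengthOf _ _ (by linarith) hab
    exact ⟨l, hl.1, hl.2.1, hl.2.2.1, hl.2.2.2.1, ((lt_strengthOf_iff _ β l).mp hstrength).2⟩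

theorem stmt16 {A ι : Type*} [Fintype A] [Fintype ι] (Ri : ι → A → A → Prop)
    (f : ℕ → ℕ → ℝ)
    (hf0 : ∀ n m : ℕ, f n m ∈ Set.Icc (0:ℝ) 1)
    (hf1 : ∀ n m : ℕ, n + m ≤ Fintype.card ι → f (n+1) m > f n m)
    (hf2 : ∀ n m : ℕ, n + m ≤ Fintype.card ι → f n (m+1) < f n m)
    (hf3 : ∀ n : ℕ, n + n ≤ Fintype.card ι → f n n = 1/2)
    (a b : A)
    (hB1 : 1/2 ≤ Bval (Rmaj Ri f (1/2)) (PhiFn Ri f) b a)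
    (hB2 : Bval (Rmaj Ri f (1/2)) (PhiFn Ri f) b a < 1) :
    (¬ ∃ l : List A, IsPathFrom (Rmaj Ri f (Bval (Rmaj Ri f (1/2)) (PhiFn Ri f) b a)) b a l) ∧
    (Bval (Rmaj Ri f (1/2)) (PhiFn Ri f) a b > Bval (Rmaj Ri f (1/2)) (PhiFn Ri f) b a →
      ∃ l : List A, IsPathFrom (Rmaj Ri f (Bval (Rmaj Ri f (1/2)) (PhiFn Ri f) b a)) a b l) :=
  stmt16_general Ri f a b hB1 hB2
end

section
/- Every linear order that respects the Suzumura-consistent closure S(R_{1/2}) of the simple majority relation satisfies the extended Condorcet criterion: for every partition {A_1,...,A_X} of A such that all alternatives in an earlier block majority-beat all alternatives in later blocks, the linear order ranks every element of an earlier block above every element of a later block. -/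
theorem stmt17 {A ι : Type*} [Fintype A] [Fintype ι] (Ri : ι → A → A → Prop)
    (L : A → A → Prop)
    (hL : Respects (Scl (fun a b : A => Ncnt Ri a b > Ncnt Ri b a)) L)
    (X : ℕ) (Ap : Fin X → Set A)
    (hpart : ∀ a : A, ∃! x : Fin X, a ∈ Ap x)
    (hbeat : ∀ x x' : Fin X, x < x' → ∀ a ∈ Ap x, ∀ a' ∈ Ap x',
      Ncnt Ri a a' > Ncnt Ri a' a) :
    ∀ x x' : Fin X, x < x' → ∀ a ∈ Ap x, ∀ a' ∈ Ap x', L a a' := by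
  intro x x' hxx a ha a' ha'
  set R : A → A → Prop := fun a b : A => Ncnt Ri a b > Ncnt Ri b a with hR
  -- block index
  have hblk : ∀ b c : A, R b c → ∀ y z : Fin X, b ∈ Ap y → c ∈ Ap z → y ≤ z := by
    intro b c hbc y z hb hc
    by_contra h
    push_neg at h
    exact absurd (hbeat z y h c hc b hb) (not_lt.mpr (le_of_lt hbc))
  have htg : ∀ b c : A, Relation.TransGen R b c →
      ∀ y z : Fin X, b ∈ Ap y → c ∈ Ap z → y ≤ z := by
    intro b c htc
    induction htc with
    | single h => intro y z hb hc; exact hblk _ _ h y z hb hc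
    | tail _ h ih =>
      intro y z hb hc
      obtain ⟨w, hw, _⟩ := hpart _
      exact le_trans (ih y w hb hw) (hblk _ _ h w z hw hc)
  have hRaa' : R a a' := hbeat x x' hxx a ha a' ha'
  apply hL.2
  constructor
  · exact Or.inl hRaa'
  · rintro (h | ⟨htr, _⟩)
    · exact absurd hRaa' (not_lt.mpr (le_of_lt h))
    · exact absurd (htg a' a htr x' x ha' ha) (not_le.mpr hxx)
end
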